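/- arXiv:2403.20068 — 2 statements merged into one kernel-verified Lean document; each statement's English description precedes it below -/
import Mathlib

section
/- Let T > 0, b > 0, and assume f satisfies (H1)–(H7). If m > m̃ := T(m*)²/2, where m* is the unique positive zero of A(s) = 4π²/T² + b(f(s)/s − f'(s)), then the constant function √(2m/T) cannot be a minimizer of the energy on the mass constraint among T-periodic functions: the linearized operator −∂_xx + b√(T/(2m)) f(√(2m/T)) − b f'(√(2m/T)) acting on T-periodic functions has at least two negative eigenvalues (the modes n = 0 and n = ±1). -/
open Set

/-- if `m > m̃ = T (m*)² / 2`, the constant `√(2m/T)` cannot be an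
energy minimizer at mass `m`: the modes `n = 0` and `n = ±1` of the linearized
operator `-∂ₓₓ + b√(T/(2m)) f(√(2m/T)) - b f'(√(2m/T))` are both negative
eigenvalues. The nonlinearity satisfies (H1)–(H7). -/
theorem stmt6 (T b : ℝ) (hT : 0 < T) (hb : 0 < b)
    (f F f' f'' : ℝ → ℝ)
    (hdF : ∀ s ∈ Ioi (0:ℝ), HasDerivAt F (f s) s)
    (hd1 : ∀ s ∈ Ioi (0:ℝ), HasDerivAt f (f' s) s)
    (hd2 : ∀ s ∈ Ioi (0:ℝ), HasDerivAt f' (f'' s) s)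
    -- (H1)
    (h1 : MonotoneOn f' (Ioi (0:ℝ)))
    -- (H2)
    (h2 : Filter.Tendsto (fun r => F r / r ^ 2) Filter.atTop Filter.atTop)
    -- (H3)
    (h3 : StrictMonoOn (fun s => f s / s) (Ioi (0:ℝ)))
    (h3' : Filter.Tendsto (fun s => f s / s) (nhdsWithin 0 (Ioi (0:ℝ))) (nhds 0))
    -- (H4)
    (h4 : StrictMonoOn (fun s => (s * f s - 2 * F s) / s ^ 2) (Ioi (0:ℝ)))
    (h4' : Filter.Tendsto (fun s => (s * f s - 2 * F s) / s ^ 2)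
      (nhdsWithin 0 (Ioi (0:ℝ))) (nhds 0))
    -- (H5)
    (h5 : ∃ M > (0:ℝ), ∃ p : ℝ, 1 < p ∧ p < 5 ∧ ∃ s0 : ℝ,
      ∀ s ≥ s0, |f s| ≤ M * s ^ p)
    -- (H6)
    (h6 : ∀ s : ℝ, 0 < s → s ^ 2 * f'' s > s * f' s - f s)
    -- (H7)
    (h7 : Filter.Tendsto (fun s => f s / s - f' s) Filter.atTop Filter.atBot)
    (mstar : ℝ) (hmstar : 0 < mstar)
    (hAzero : 4 * Real.pi ^ 2 / T ^ 2 + b * (f mstar / mstar - f' mstar) = 0)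
    (m : ℝ) (hm : T * mstar ^ 2 / 2 < m) :
    b * (Real.sqrt (T / (2 * m)) * f (Real.sqrt (2 * m / T))
        - f' (Real.sqrt (2 * m / T))) < 0 ∧
    (2 * Real.pi / T) ^ 2 + b * (Real.sqrt (T / (2 * m)) * f (Real.sqrt (2 * m / T))
        - f' (Real.sqrt (2 * m / T))) < 0 := by
  have hπ : (0:ℝ) < Real.pi := Real.pi_pos
  set g : ℝ → ℝ := fun s => f s / s - f' s with hgdef
  have hgd : ∀ x ∈ Ioi (0:ℝ), HasDerivAt g ((f' x * x - f x * 1) / x ^ 2 - f'' x) x := by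
    intro x hx
    have hx0 : (x:ℝ) ≠ 0 := ne_of_gt hx
    exact ((hd1 x hx).div (hasDerivAt_id x) hx0).sub (hd2 x hx)
  have hanti : StrictAntiOn g (Ioi (0:ℝ)) := by
    apply strictAntiOn_of_deriv_neg (convex_Ioi 0)
    · exact fun x hx => (hgd x hx).continuousAt.continuousWithinAt
    · intro x hx
      rw [interior_Ioi] at hx
      have hxpos : (0:ℝ) < x := hx
      rw [(hgd x hx).deriv]
      have h6x := h6 x hx
      have hx2 : (0:ℝ) < x ^ 2 := by positivity
      rw [sub_neg, div_lt_iff₀ hx2]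
      nlinarith
  -- positivity facts
  have hm0 : 0 < m := lt_trans (by positivity) hm
  have hratio : 0 < 2 * m / T := by positivity
  set s := Real.sqrt (2 * m / T) with hs
  have hs0 : 0 < s := Real.sqrt_pos.mpr hratio
  have hms : mstar < s := by
    have h1' : mstar ^ 2 < 2 * m / T := by
      rw [lt_div_iff₀ hT]; nlinarith
    calc mstar = Real.sqrt (mstar ^ 2) := (Real.sqrt_sq hmstar.le).symm
      _ < s := Real.sqrt_lt_sqrt (by positivity) h1'
  have hinv : Real.sqrt (T / (2 * m)) = s⁻¹ := by
    rw [hs, ← Real.sqrt_inv]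
    congr 1
    field_simp
  have hkey : b * g s < - (4 * Real.pi ^ 2 / T ^ 2) := by
    have hgs : g s < g mstar := hanti (mem_Ioi.mpr hmstar) (mem_Ioi.mpr hs0) hms
    have : b * g mstar = - (4 * Real.pi ^ 2 / T ^ 2) := by
      have := hAzero
      simp only [hgdef]
      linarith
    have hmul : b * g s < b * g mstar := (mul_lt_mul_iff_right₀ hb).mpr hgs
    exact hmul.trans_eq this
  have heq : Real.sqrt (T / (2 * m)) * f s - f' s = g s := by
    rw [hinv, hgdef]
    simp [div_eq_inv_mul, mul_comm]
  have hpos : 0 < 4 * Real.pi ^ 2 / T ^ 2 := by positivity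
  constructor
  · rw [heq]
    exact hkey.trans (neg_neg_of_pos hpos)
  · rw [heq]
    have h2eq : (2 * Real.pi / T) ^ 2 = 4 * Real.pi ^ 2 / T ^ 2 := by ring
    rw [h2eq]
    have := add_lt_add_left hkey (4 * Real.pi ^ 2 / T ^ 2)
    linarith
end

section
/- Let T > 0 and let v ∈ H¹_loc(ℝ) satisfy v(x + T/2) = −v(x) (so its Fourier series on [0,T] contains only odd modes v(x) = Σ_{j odd} v_j e^{ij2πx/T}). Let p > 1 be an odd integer. Define ṽ(x) = Σ_{j odd} ṽ_j e^{ij2πx/T} with ṽ_j = √((|v_j|² + |v_{−j}|²)/2). Then ṽ is real-valued, ‖ṽ‖_{L²(0,T)} = ‖v‖_{L²(0,T)}, ‖ṽ_x‖_{L²(0,T)} = ‖v_x‖_{L²(0,T)}, and ‖ṽ‖_{L^{p+1}(0,T)} ≥ ‖v‖_{L^{p+1}(0,T)}. -/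
open Set MeasureTheory
open scoped ENNReal NNReal

noncomputable def EE (T : ℝ) (j : ℤ) (x : ℝ) : ℂ :=
  Complex.exp (Complex.I * j * (2 * Real.pi) * x / T)

lemma EE_eq (T : ℝ) (j : ℤ) (x : ℝ) :
    EE T j x = Complex.exp ((((j : ℝ) * (2 * Real.pi) * x / T : ℝ) : ℂ) * Complex.I) := by
  unfold EE; congr 1; push_cast; ring

lemma EE_norm (T : ℝ) (j : ℤ) (x : ℝ) : ‖EE T j x‖ = 1 := by
  rw [EE_eq]
  exact Complex.norm_exp_ofReal_mul_I _

lemma EE_mul (T : ℝ) (j k : ℤ) (x : ℝ) : EE T j x * EE T k x = EE T (j + k) x := by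
  rw [EE_eq, EE_eq, EE_eq, ← Complex.exp_add]
  congr 1
  push_cast
  ring

lemma EE_conj (T : ℝ) (j : ℤ) (x : ℝ) : starRingEnd ℂ (EE T j x) = EE T (-j) x := by
  rw [EE_eq, EE_eq, ← Complex.exp_conj]
  congr 1
  have : (starRingEnd ℂ) (((j : ℝ) * (2 * Real.pi) * x / T : ℝ) : ℂ) * (starRingEnd ℂ) Complex.I
      = (((j:ℝ) * (2 * Real.pi) * x / T : ℝ) : ℂ) * (-Complex.I) := by
    rw [Complex.conj_ofReal, Complex.conj_I]
  rw [map_mul, this]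
  push_cast
  ring

lemma EE_zero (T : ℝ) (x : ℝ) : EE T 0 x = 1 := by
  simp [EE]

lemma EE_continuous (T : ℝ) (j : ℤ) : Continuous (EE T j) := by
  unfold EE
  fun_prop

lemma EE_integral (T : ℝ) (hT : 0 < T) (n : ℤ) :
    ∫ x in (0:ℝ)..T, EE T n x = if n = 0 then (T : ℂ) else 0 := by
  rcases eq_or_ne n 0 with h | h
  · simp [h, EE_zero]
  · have hK : (Complex.I * n * (2 * Real.pi) / T : ℂ) ≠ 0 := by
      apply div_ne_zero
      · simp [Complex.I_ne_zero, Complex.ext_iff]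
        push_cast
        exact h
      · exact_mod_cast hT.ne'
    have : ∀ x : ℝ, EE T n x = Complex.exp ((Complex.I * n * (2 * Real.pi) / T) * x) := by
      intro x; unfold EE; congr 1; ring
    simp only [this, h, if_false]
    rw [integral_exp_mul_complex hK]
    have h1 : (Complex.I * n * (2 * Real.pi) / T) * (T:ℂ) = n * (2 * Real.pi * Complex.I) := by
      have : (T:ℂ) ≠ 0 := by exact_mod_cast hT.ne'
      field_simp
    rw [h1, Complex.exp_int_mul_two_pi_mul_I]
    simp

section Expand

variable {κ : Type*} {κ' : Type*}

lemma summable_coef_mul_EE {T : ℝ} {B : κ → ℂ} (hB : Summable fun q => ‖B q‖)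
    (ν : κ → ℤ) (x : ℝ) : Summable fun q => ‖B q * EE T (ν q) x‖ := by
  simp only [norm_mul, EE_norm, mul_one]
  exact hB

/-- Product of two expansions. -/
lemma tsum_EE_mul {T : ℝ} {B : κ → ℂ} {C : κ' → ℂ} (hB : Summable fun q => ‖B q‖)
    (hC : Summable fun q => ‖C q‖) (ν : κ → ℤ) (μ : κ' → ℤ) (x : ℝ) :
    (∑' q, B q * EE T (ν q) x) * (∑' r, C r * EE T (μ r) x)
      = ∑' s : κ × κ', (B s.1 * C s.2) * EE T (ν s.1 + μ s.2) x := by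
  rw [tsum_mul_tsum_of_summable_norm (summable_coef_mul_EE hB ν x)
    (summable_coef_mul_EE hC μ x)]
  apply tsum_congr
  intro s
  rw [← EE_mul]
  ring

set_option maxHeartbeats 1000000 in
lemma summable_prod_norm {B : κ → ℂ} (hB : Summable fun q => ‖B q‖) (m : ℕ) :
    Summable fun f : Fin m → κ => ∏ i, ‖B (f i)‖ := by
  induction m with
  | zero => exact Summable.of_finite
  | succ m ih =>
      have h0 : (0 : κ → ℝ) ≤ fun q => ‖B q‖ := fun q => norm_nonneg _
      have h0' : (0 : (Fin m → κ) → ℝ) ≤ fun f => ∏ i, ‖B (f i)‖ :=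
        fun f => Finset.prod_nonneg fun i _ => norm_nonneg _
      have h1 : Summable fun x : κ × (Fin m → κ) => ‖B x.1‖ * ∏ i, ‖B (x.2 i)‖ :=
        Summable.mul_of_nonneg (f := fun q => ‖B q‖)
          (g := fun f : Fin m → κ => ∏ i, ‖B (f i)‖) hB ih h0 h0'
      have h2 : Summable ((fun f : Fin (m+1) → κ => ∏ i, ‖B (f i)‖)
          ∘ (Fin.consEquiv fun _ => κ)) := by
        refine h1.congr fun qf => ?_
        simp [Fin.consEquiv, Fin.prod_univ_succ]
      exact (Equiv.summable_iff _).1 h2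

lemma summable_prod_norm' {B : κ → ℂ} (hB : Summable fun q => ‖B q‖) (m : ℕ) :
    Summable fun f : Fin m → κ => ‖∏ i, B (f i)‖ := by
  simpa [norm_prod] using summable_prod_norm hB m

/-- Power of an expansion. -/
lemma tsum_EE_pow {T : ℝ} {B : κ → ℂ} (hB : Summable fun q => ‖B q‖)
    (ν : κ → ℤ) (x : ℝ) (m : ℕ) :
    (∑' q, B q * EE T (ν q) x) ^ m
      = ∑' f : Fin m → κ, (∏ i, B (f i)) * EE T (∑ i, ν (f i)) x := by
  induction m with
  | zero =>
      simp only [pow_zero]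
      rw [tsum_eq_single (default : Fin 0 → κ)]
      · simp [EE_zero]
      · intro f hf
        exact absurd (Subsingleton.elim f default) hf
  | succ m ih =>
      rw [pow_succ, mul_comm, ih,
        tsum_EE_mul hB (summable_prod_norm' hB m) ν (fun f : Fin m → κ => ∑ i, ν (f i)) x,
        ← (Fin.consEquiv (fun _ : Fin (m+1) => κ)).tsum_eq]
      apply tsum_congr
      intro qf
      simp [Fin.consEquiv, Fin.prod_univ_succ, Fin.sum_univ_succ]

end Expand

lemma integral_tsum_EE {ι : Type*} [Countable ι] (T : ℝ) (hT : 0 < T) (A : ι → ℂ)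
    (ν : ι → ℤ) (hA : Summable fun i => ‖A i‖) :
    ∫ x in (0:ℝ)..T, (∑' i, A i * EE T (ν i) x)
      = T * ∑' i, (if ν i = 0 then A i else 0) := by
  have hmeas : ∀ i, AEStronglyMeasurable (fun x => A i * EE T (ν i) x)
      (volume.restrict (Set.Ioc (0:ℝ) T)) := fun i =>
    (Continuous.aestronglyMeasurable (by have := EE_continuous T (ν i); fun_prop))
  have hnn : Summable fun i => ‖A i‖₊ := by
    rw [← NNReal.summable_coe]
    simpa [coe_nnnorm] using hA
  have hfin : (∑' i, ∫⁻ x in Set.Ioc (0:ℝ) T, ‖A i * EE T (ν i) x‖₊) ≠ ⊤ := by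
    have heq : ∀ i, (∫⁻ x in Set.Ioc (0:ℝ) T, ‖A i * EE T (ν i) x‖₊)
        = (‖A i‖₊ : ℝ≥0∞) * ENNReal.ofReal T := by
      intro i
      have : ∀ x : ℝ, (‖A i * EE T (ν i) x‖₊ : ℝ≥0∞) = (‖A i‖₊ : ℝ≥0∞) := by
        intro x
        have h2 : ‖A i * EE T (ν i) x‖₊ = ‖A i‖₊ := by
          ext
          rw [coe_nnnorm, coe_nnnorm, norm_mul, EE_norm, mul_one]
        rw [h2]
      simp only [this]
      rw [MeasureTheory.lintegral_const, Measure.restrict_apply MeasurableSet.univ,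
        Set.univ_inter, Real.volume_Ioc, sub_zero]
    simp only [heq]
    rw [ENNReal.tsum_mul_right]
    exact ENNReal.mul_ne_top (ENNReal.tsum_coe_ne_top_iff_summable.2 hnn) ENNReal.ofReal_ne_top
  rw [intervalIntegral.integral_of_le hT.le, MeasureTheory.integral_tsum hmeas hfin]
  rw [← tsum_mul_left]
  apply tsum_congr
  intro i
  rw [MeasureTheory.integral_const_mul, ← intervalIntegral.integral_of_le hT.le,
    EE_integral T hT (ν i)]
  by_cases h : ν i = 0 <;> simp [h] <;> ring

lemma conj_tsum_EE {T : ℝ} (D : ℤ → ℂ) (x : ℝ) :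
    (starRingEnd ℂ) (∑' j, D j * EE T j x)
      = ∑' j, (starRingEnd ℂ) (D j) * EE T (-j) x := by
  rw [show ((starRingEnd ℂ) (∑' j, D j * EE T j x)) = star (∑' j, D j * EE T j x) from rfl,
    tsum_star]
  apply tsum_congr
  intro j
  show (starRingEnd ℂ) (D j * EE T j x) = _
  rw [map_mul, EE_conj]

lemma summable_conj (D : ℤ → ℂ) (hD : Summable fun j => ‖D j‖) :
    Summable fun j => ‖(starRingEnd ℂ) (D j)‖ := by
  simpa using hD

lemma summable_B (D : ℤ → ℂ) (hD : Summable fun j => ‖D j‖) :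
    Summable fun q : ℤ × ℤ => ‖D q.1 * (starRingEnd ℂ) (D q.2)‖ :=
  Summable.mul_norm (f := D) (g := fun k => (starRingEnd ℂ) (D k)) hD (summable_conj D hD)

/-- `F x * conj (F x)` expanded. -/
lemma mul_conj_tsum_EE {T : ℝ} (D : ℤ → ℂ) (hD : Summable fun j => ‖D j‖) (x : ℝ) :
    ((‖∑' j, D j * EE T j x‖ ^ 2 : ℝ) : ℂ)
      = ∑' q : ℤ × ℤ, (D q.1 * (starRingEnd ℂ) (D q.2)) * EE T (q.1 - q.2) x := by
  have h1 : ((‖∑' j, D j * EE T j x‖ ^ 2 : ℝ) : ℂ)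
      = (∑' j, D j * EE T j x) * (starRingEnd ℂ) (∑' j, D j * EE T j x) := by
    rw [Complex.mul_conj]
    norm_cast
    rw [Complex.normSq_eq_norm_sq]
  rw [h1, conj_tsum_EE, tsum_EE_mul hD (summable_conj D hD) (fun j => j) (fun k => -k) x]
  apply tsum_congr
  intro q
  rw [sub_eq_add_neg]

/-- Parseval. -/
lemma parseval_EE (T : ℝ) (hT : 0 < T) (D : ℤ → ℂ) (hD : Summable fun j => ‖D j‖) :
    (∫ x in (0:ℝ)..T, ‖∑' j, D j * EE T j x‖ ^ 2) = T * ∑' j, ‖D j‖ ^ 2 := by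
  have hB := summable_B D hD
  have key : ((∫ x in (0:ℝ)..T, ‖∑' j, D j * EE T j x‖ ^ 2 : ℝ) : ℂ)
      = T * ∑' q : ℤ × ℤ, (if q.1 - q.2 = 0 then D q.1 * (starRingEnd ℂ) (D q.2) else 0) := by
    rw [← intervalIntegral.integral_ofReal]
    calc ∫ x in (0:ℝ)..T, ((‖∑' j, D j * EE T j x‖ ^ 2 : ℝ) : ℂ)
        = ∫ x in (0:ℝ)..T, ∑' q : ℤ × ℤ,
            (D q.1 * (starRingEnd ℂ) (D q.2)) * EE T (q.1 - q.2) x := by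
          apply intervalIntegral.integral_congr
          intro x _
          exact mul_conj_tsum_EE D hD x
      _ = T * ∑' q : ℤ × ℤ, (if q.1 - q.2 = 0 then D q.1 * (starRingEnd ℂ) (D q.2) else 0) :=
          integral_tsum_EE T hT _ (fun q : ℤ × ℤ => q.1 - q.2) hB
  have hdiag : (∑' q : ℤ × ℤ, (if q.1 - q.2 = 0 then D q.1 * (starRingEnd ℂ) (D q.2) else 0))
      = ((∑' j, ‖D j‖ ^ 2 : ℝ) : ℂ) := by
    have hsum2 : Summable fun q : ℤ × ℤ =>
        (if q.1 - q.2 = 0 then D q.1 * (starRingEnd ℂ) (D q.2) else 0) := by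
      apply Summable.of_norm
      apply Summable.of_nonneg_of_le (fun q => norm_nonneg _) _ hB
      intro q
      by_cases h : q.1 - q.2 = 0
      · simp [h]
      · simp only [h, if_false, norm_zero]
        positivity
    rw [Summable.tsum_prod' hsum2 (fun j => hsum2.prod_factor j)]
    rw [Complex.ofReal_tsum]
    apply tsum_congr
    intro j
    rw [tsum_eq_single j]
    · simp only [sub_self, if_true, Complex.mul_conj]
      norm_cast
      rw [Complex.normSq_eq_norm_sq]
    · intro k hk
      have h2 : j - k ≠ 0 := sub_ne_zero.2 (Ne.symm hk)
      simp [h2]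
  rw [hdiag] at key
  exact_mod_cast key

/-- Core identity: the `L^{2m}` "norm" as an explicit sum over tuples. -/
lemma core_EE (T : ℝ) (hT : 0 < T) (D : ℤ → ℂ) (hD : Summable fun j => ‖D j‖) (m : ℕ) :
    ((∫ x in (0:ℝ)..T, ‖∑' j, D j * EE T j x‖ ^ (2 * m) : ℝ) : ℂ)
      = T * ∑' f : Fin m → ℤ × ℤ,
          (if (∑ i, ((f i).1 - (f i).2)) = 0
            then ∏ i, (D (f i).1 * (starRingEnd ℂ) (D (f i).2)) else 0) := by
  have hB := summable_B D hD
  have key : ∀ x : ℝ, ((‖∑' j, D j * EE T j x‖ ^ (2 * m) : ℝ) : ℂ)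
      = ∑' f : Fin m → ℤ × ℤ,
          (∏ i, (D (f i).1 * (starRingEnd ℂ) (D (f i).2)))
            * EE T (∑ i, ((f i).1 - (f i).2)) x := by
    intro x
    have h1 : ((‖∑' j, D j * EE T j x‖ ^ (2 * m) : ℝ) : ℂ)
        = (((‖∑' j, D j * EE T j x‖ ^ 2 : ℝ) : ℂ)) ^ m := by
      push_cast
      rw [← pow_mul]
    rw [h1, mul_conj_tsum_EE D hD x,
      tsum_EE_pow hB (fun q : ℤ × ℤ => q.1 - q.2) x m]
  rw [← intervalIntegral.integral_ofReal]
  calc ∫ x in (0:ℝ)..T, ((‖∑' j, D j * EE T j x‖ ^ (2 * m) : ℝ) : ℂ)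
      = ∫ x in (0:ℝ)..T, ∑' f : Fin m → ℤ × ℤ,
          (∏ i, (D (f i).1 * (starRingEnd ℂ) (D (f i).2)))
            * EE T (∑ i, ((f i).1 - (f i).2)) x := by
        apply intervalIntegral.integral_congr
        intro x _
        exact key x
    _ = T * ∑' f : Fin m → ℤ × ℤ,
          (if (∑ i, ((f i).1 - (f i).2)) = 0
            then ∏ i, (D (f i).1 * (starRingEnd ℂ) (D (f i).2)) else 0) :=
        integral_tsum_EE T hT _ (fun f : Fin m → ℤ × ℤ => ∑ i, ((f i).1 - (f i).2))
          (summable_prod_norm' hB m)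

/-- The reindexing `(n, j) ↦ (j, j - n)` of `ℤ × ℤ`. -/
def psiZZ : ℤ × ℤ ≃ ℤ × ℤ where
  toFun q := (q.2, q.2 - q.1)
  invFun q := (q.1 - q.2, q.1)
  left_inv q := by simp
  right_inv q := by simp

/-- Convolution coefficients. -/
noncomputable def WD (D : ℤ → ℂ) (n : ℤ) : ℂ := ∑' j : ℤ, D j * (starRingEnd ℂ) (D (j - n))

lemma summable_fiber_W (D : ℤ → ℂ) (hD : Summable fun j => ‖D j‖) (n : ℤ) :
    Summable fun j : ℤ => ‖D j * (starRingEnd ℂ) (D (j - n))‖ := by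
  have h := summable_B D hD
  have hg : Function.Injective (fun j : ℤ => ((j, j - n) : ℤ × ℤ)) := by
    intro x y hxy
    exact (Prod.mk.injEq _ _ _ _ ▸ hxy).1
  have h2 : Summable ((fun q : ℤ × ℤ => ‖D q.1 * (starRingEnd ℂ) (D q.2)‖)
      ∘ (fun j : ℤ => ((j, j - n) : ℤ × ℤ))) := h.comp_injective hg
  exact h2.congr fun j => rfl

lemma summable_W_family (D : ℤ → ℂ) (hD : Summable fun j => ‖D j‖) :
    Summable fun q : ℤ × ℤ => ‖D q.2 * (starRingEnd ℂ) (D (q.2 - q.1))‖ := by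
  have h := summable_B D hD
  have := (psiZZ.summable_iff (f := fun q : ℤ × ℤ => ‖D q.1 * (starRingEnd ℂ) (D q.2)‖)).2 h
  refine this.congr fun q => ?_
  simp [psiZZ]

lemma summable_WA (D : ℤ → ℂ) (hD : Summable fun j => ‖D j‖) :
    Summable fun n : ℤ => ∑' j : ℤ, ‖D j * (starRingEnd ℂ) (D (j - n))‖ := by
  have h := summable_W_family D hD
  exact ((summable_prod_of_nonneg (fun q => norm_nonneg _)).1 h).2

lemma norm_WD_le (D : ℤ → ℂ) (hD : Summable fun j => ‖D j‖) (n : ℤ) :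
    ‖WD D n‖ ≤ ∑' j : ℤ, ‖D j * (starRingEnd ℂ) (D (j - n))‖ :=
  norm_tsum_le_tsum_norm (summable_fiber_W D hD n)

lemma summable_norm_WD (D : ℤ → ℂ) (hD : Summable fun j => ‖D j‖) :
    Summable fun n => ‖WD D n‖ :=
  Summable.of_nonneg_of_le (fun n => norm_nonneg _) (norm_WD_le D hD) (summable_WA D hD)

/-- `F x * conj (F x)` in convolution form. -/
lemma mul_conj_tsum_W {T : ℝ} (D : ℤ → ℂ) (hD : Summable fun j => ‖D j‖) (x : ℝ) :
    ((‖∑' j, D j * EE T j x‖ ^ 2 : ℝ) : ℂ) = ∑' n : ℤ, WD D n * EE T n x := by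
  rw [mul_conj_tsum_EE D hD x]
  rw [← psiZZ.tsum_eq (f := fun q : ℤ × ℤ => (D q.1 * (starRingEnd ℂ) (D q.2)) * EE T (q.1 - q.2) x)]
  have h1 : ∀ q : ℤ × ℤ,
      (D (psiZZ q).1 * (starRingEnd ℂ) (D (psiZZ q).2)) * EE T ((psiZZ q).1 - (psiZZ q).2) x
        = (D q.2 * (starRingEnd ℂ) (D (q.2 - q.1))) * EE T q.1 x := by
    intro q
    have h2 : (psiZZ q).1 = q.2 := rfl
    have h3 : (psiZZ q).2 = q.2 - q.1 := rfl
    rw [h2, h3]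
    have h4 : q.2 - (q.2 - q.1) = q.1 := by ring
    rw [h4]
  rw [tsum_congr h1]
  have hsum : Summable fun q : ℤ × ℤ => (D q.2 * (starRingEnd ℂ) (D (q.2 - q.1))) * EE T q.1 x := by
    apply Summable.of_norm
    have := summable_W_family D hD
    refine this.congr fun q => ?_
    symm
    rw [norm_mul, EE_norm, mul_one]
  rw [Summable.tsum_prod' hsum (fun n => hsum.prod_factor n)]
  apply tsum_congr
  intro n
  have h5 : ∀ c : ℤ, D ((n, c) : ℤ × ℤ).2
      * (starRingEnd ℂ) (D (((n, c) : ℤ × ℤ).2 - ((n, c) : ℤ × ℤ).1))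
      * EE T ((n, c) : ℤ × ℤ).1 x
      = D c * (starRingEnd ℂ) (D (c - n)) * EE T n x := fun c => rfl
  rw [tsum_congr h5, tsum_mul_right, WD]

/-- Core identity in convolution form. -/
lemma core_W (T : ℝ) (hT : 0 < T) (D : ℤ → ℂ) (hD : Summable fun j => ‖D j‖) (m : ℕ) :
    ((∫ x in (0:ℝ)..T, ‖∑' j, D j * EE T j x‖ ^ (2 * m) : ℝ) : ℂ)
      = T * ∑' g : Fin m → ℤ,
          (if (∑ i, g i) = 0 then ∏ i, WD D (g i) else 0) := by
  have hW := summable_norm_WD D hD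
  have key : ∀ x : ℝ, ((‖∑' j, D j * EE T j x‖ ^ (2 * m) : ℝ) : ℂ)
      = ∑' g : Fin m → ℤ, (∏ i, WD D (g i)) * EE T (∑ i, g i) x := by
    intro x
    have h1 : ((‖∑' j, D j * EE T j x‖ ^ (2 * m) : ℝ) : ℂ)
        = (((‖∑' j, D j * EE T j x‖ ^ 2 : ℝ) : ℂ)) ^ m := by
      push_cast
      rw [← pow_mul]
    rw [h1, mul_conj_tsum_W D hD x, tsum_EE_pow hW (fun n : ℤ => n) x m]
  rw [← intervalIntegral.integral_ofReal]
  calc ∫ x in (0:ℝ)..T, ((‖∑' j, D j * EE T j x‖ ^ (2 * m) : ℝ) : ℂ)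
      = ∫ x in (0:ℝ)..T, ∑' g : Fin m → ℤ, (∏ i, WD D (g i)) * EE T (∑ i, g i) x := by
        apply intervalIntegral.integral_congr
        intro x _
        exact key x
    _ = T * ∑' g : Fin m → ℤ, (if (∑ i, g i) = 0 then ∏ i, WD D (g i) else 0) :=
        integral_tsum_EE T hT _ (fun g : Fin m → ℤ => ∑ i, g i) (summable_prod_norm' hW m)

lemma cs_pair {a : ℤ → ℝ} (h0 : ∀ j, 0 ≤ a j) (j k : ℤ) :
    a j * a k + a (-j) * a (-k)
      ≤ 2 * (Real.sqrt ((a j ^ 2 + a (-j) ^ 2) / 2) * Real.sqrt ((a k ^ 2 + a (-k) ^ 2) / 2)) := by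
  set u := Real.sqrt ((a j ^ 2 + a (-j) ^ 2) / 2) with hu_def
  set w := Real.sqrt ((a k ^ 2 + a (-k) ^ 2) / 2) with hw_def
  have hu0 : 0 ≤ u := Real.sqrt_nonneg _
  have hw0 : 0 ≤ w := Real.sqrt_nonneg _
  have hu : u ^ 2 = (a j ^ 2 + a (-j) ^ 2) / 2 := Real.sq_sqrt (by positivity)
  have hw : w ^ 2 = (a k ^ 2 + a (-k) ^ 2) / 2 := Real.sq_sqrt (by positivity)
  have hL0 : 0 ≤ a j * a k + a (-j) * a (-k) := by
    have := h0 j; have := h0 k; have := h0 (-j); have := h0 (-k); positivity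
  have h4 : (a j * a k + a (-j) * a (-k)) ^ 2 ≤ (2 * (u * w)) ^ 2 := by
    nlinarith [sq_nonneg (a j * a (-k) - a (-j) * a k)]
  calc a j * a k + a (-j) * a (-k)
      = Real.sqrt ((a j * a k + a (-j) * a (-k)) ^ 2) := (Real.sqrt_sq hL0).symm
    _ ≤ Real.sqrt ((2 * (u * w)) ^ 2) := Real.sqrt_le_sqrt h4
    _ = 2 * (u * w) := Real.sqrt_sq (by positivity)

lemma WA_le_WR {a : ℤ → ℝ} (h0 : ∀ j, 0 ≤ a j) (ha : Summable a) (n : ℤ)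
    (r : ℤ → ℝ) (hr_def : ∀ j, r j = Real.sqrt ((a j ^ 2 + a (-j) ^ 2) / 2))
    (hr : Summable r) :
    ∑' j : ℤ, a j * a (j - n) ≤ ∑' j : ℤ, r j * r (j - n) := by
  have hinj : ∀ n : ℤ, Function.Injective (fun j : ℤ => ((j, j - n) : ℤ × ℤ)) := by
    intro n x y hxy
    exact (Prod.mk.injEq _ _ _ _ ▸ hxy).1
  have hta : Summable fun j : ℤ => a j * a (j - n) := by
    have hfam : Summable fun q : ℤ × ℤ => a q.1 * a q.2 :=
      Summable.mul_of_nonneg (f := a) (g := a) ha ha h0 h0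
    have h2 : Summable ((fun q : ℤ × ℤ => a q.1 * a q.2)
        ∘ (fun j : ℤ => ((j, j - n) : ℤ × ℤ))) := hfam.comp_injective (hinj n)
    exact h2.congr fun j => rfl
  have hr0 : ∀ j, 0 ≤ r j := fun j => hr_def j ▸ Real.sqrt_nonneg _
  have htr : Summable fun j : ℤ => r j * r (j - n) := by
    have hfam : Summable fun q : ℤ × ℤ => r q.1 * r q.2 :=
      Summable.mul_of_nonneg (f := r) (g := r) hr hr hr0 hr0
    have h2 : Summable ((fun q : ℤ × ℤ => r q.1 * r q.2)
        ∘ (fun j : ℤ => ((j, j - n) : ℤ × ℤ))) := hfam.comp_injective (hinj n)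
    exact h2.congr fun j => rfl
  -- reindex by j ↦ n - j
  have hre : ∑' j : ℤ, a (n - j) * a (-j) = ∑' j : ℤ, a j * a (j - n) := by
    have := (Equiv.subLeft n).tsum_eq (f := fun j : ℤ => a j * a (j - n))
    rw [← this]
    apply tsum_congr
    intro j
    have h1 : (Equiv.subLeft n) j = n - j := rfl
    rw [h1]
    congr 1
    ring
  have hta' : Summable fun j : ℤ => a (n - j) * a (-j) := by
    have h2 := ((Equiv.subLeft n).summable_iff
      (f := fun j : ℤ => a j * a (j - n))).2 hta
    refine h2.congr fun j => ?_
    show a ((Equiv.subLeft n) j) * a ((Equiv.subLeft n) j - n) = _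
    have h1 : (Equiv.subLeft n) j = n - j := rfl
    rw [h1]
    congr 2
    ring
  have hsplit : ∑' j : ℤ, (a j * a (j - n) + a (n - j) * a (-j)) / 2
      = ∑' j : ℤ, a j * a (j - n) := by
    rw [tsum_div_const, Summable.tsum_add hta hta', hre]
    ring
  rw [← hsplit]
  refine Summable.tsum_le_tsum (fun j => ?_) ((hta.add hta').div_const 2) htr
  have hcs := cs_pair h0 j (j - n)
  rw [← hr_def j, ← hr_def (j - n)] at hcs
  have hneg : a (-(j - n)) = a (n - j) := by congr 1; ring
  rw [hneg] at hcs
  linarith [hcs]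

lemma normCoe (x : ℝ) : ‖((x : ℝ) : ℂ)‖ = |x| := by
  rw [Complex.norm_real, Real.norm_eq_abs]

lemma summable_neg_Z {g : ℤ → ℝ} (hg : Summable g) : Summable fun j => g (-j) :=
  ((Equiv.neg ℤ).summable_iff (f := g)).2 hg

lemma tsum_neg_Z (g : ℤ → ℝ) : ∑' j : ℤ, g (-j) = ∑' j : ℤ, g j :=
  (Equiv.neg ℤ).tsum_eq g

lemma tsum_half_even {g : ℤ → ℝ} (hg : Summable g) :
    ∑' j : ℤ, (g j + g (-j)) / 2 = ∑' j : ℤ, g j := by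
  rw [tsum_div_const, Summable.tsum_add hg (summable_neg_Z hg), tsum_neg_Z]
  ring

lemma summable_sq {a : ℤ → ℝ} (h0 : ∀ j, 0 ≤ a j) (ha : Summable a) :
    Summable fun j => a j ^ 2 := by
  refine Summable.of_nonneg_of_le (fun j => sq_nonneg _) (fun j => ?_)
    (ha.mul_left (∑' k, a k))
  have h1 : a j ≤ ∑' k, a k := Summable.le_tsum ha j fun k _ => h0 k
  calc a j ^ 2 = a j * a j := sq (a j)
    _ ≤ (∑' k, a k) * a j := mul_le_mul_of_nonneg_right h1 (h0 j)



open Set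

/-- Fourier rearrangement lemma. Given a `T/2`-anti-periodic
function `v(x) = ∑_{j odd} c_j e^{ij2πx/T}`, the rearranged function `ṽ` with
coefficients `ṽ_j = √((|c_j|² + |c_{-j}|²)/2)` is real-valued, has the same `L²`
norm and the same `L²` norm of the derivative, and a larger `L^{p+1}` norm for
`p > 1` an odd integer. -/
theorem stmt10 (T : ℝ) (hT : 0 < T) (p : ℕ) (hp : 1 < p) (hpodd : Odd p)
    (c : ℤ → ℂ) (hsupp : ∀ j : ℤ, ¬ Odd j → c j = 0)
    (hsum : Summable fun j : ℤ => (1 + |(j:ℝ)|) * ‖c j‖) :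
    let e : ℤ → ℝ → ℂ := fun j x => Complex.exp (Complex.I * j * (2 * Real.pi) * x / T)
    let v : ℝ → ℂ := fun x => ∑' j : ℤ, c j * e j x
    let ct : ℤ → ℂ := fun j => ((Real.sqrt ((‖c j‖ ^ 2 + ‖c (-j)‖ ^ 2) / 2) : ℝ) : ℂ)
    let vt : ℝ → ℂ := fun x => ∑' j : ℤ, ct j * e j x
    (∀ x, (vt x).im = 0) ∧
    ((∫ x in (0:ℝ)..T, ‖vt x‖ ^ 2) = ∫ x in (0:ℝ)..T, ‖v x‖ ^ 2) ∧
    ((∫ x in (0:ℝ)..T, ‖∑' j : ℤ, (Complex.I * j * (2 * Real.pi) / T) * ct j * e j x‖ ^ 2) =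
      ∫ x in (0:ℝ)..T, ‖∑' j : ℤ, (Complex.I * j * (2 * Real.pi) / T) * c j * e j x‖ ^ 2) ∧
    ((∫ x in (0:ℝ)..T, ‖v x‖ ^ (p + 1)) ≤ ∫ x in (0:ℝ)..T, ‖vt x‖ ^ (p + 1)) := by
  intro e v ct vt
  have he : e = EE T := rfl
  set a : ℤ → ℝ := fun j => ‖c j‖ with ha_def
  have ha0 : ∀ j, 0 ≤ a j := fun j => norm_nonneg _
  have ha : Summable a := by
    refine Summable.of_nonneg_of_le ha0 (fun j => ?_) hsum
    have h1 : (1 : ℝ) ≤ 1 + |(j : ℝ)| := by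
      have := abs_nonneg ((j : ℝ)); linarith
    calc a j = 1 * a j := (one_mul _).symm
      _ ≤ (1 + |(j : ℝ)|) * a j := mul_le_mul_of_nonneg_right h1 (ha0 j)
  set r : ℤ → ℝ := fun j => Real.sqrt ((a j ^ 2 + a (-j) ^ 2) / 2) with hrr_def
  have hct_eq : ∀ j, ct j = ((r j : ℝ) : ℂ) := fun j => rfl
  have hr0 : ∀ j, 0 ≤ r j := fun j => Real.sqrt_nonneg _
  have hr_even : ∀ j, r (-j) = r j := by
    intro j
    show Real.sqrt ((a (-j) ^ 2 + a (-(-j)) ^ 2) / 2) = _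
    rw [neg_neg, add_comm]
  have hr_sq : ∀ j, r j ^ 2 = (a j ^ 2 + a (-j) ^ 2) / 2 := by
    intro j
    exact Real.sq_sqrt (by positivity)
  have hr_le : ∀ j, r j ≤ a j + a (-j) := by
    intro j
    have h1 : (a j ^ 2 + a (-j) ^ 2) / 2 ≤ (a j + a (-j)) ^ 2 := by
      nlinarith [sq_nonneg (a j - a (-j)), mul_nonneg (ha0 j) (ha0 (-j))]
    calc r j ≤ Real.sqrt ((a j + a (-j)) ^ 2) := Real.sqrt_le_sqrt h1
      _ = a j + a (-j) := Real.sqrt_sq (by positivity)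
  have hr_sum : Summable r :=
    Summable.of_nonneg_of_le hr0 hr_le (ha.add (summable_neg_Z ha))
  have hct_norm : ∀ j, ‖ct j‖ = r j := by
    intro j
    rw [hct_eq, normCoe, abs_of_nonneg (hr0 j)]
  have hctsum : Summable fun j => ‖ct j‖ := by
    refine hr_sum.congr fun j => ?_
    exact (hct_norm j).symm
  have hasq : Summable fun j => a j ^ 2 := summable_sq ha0 ha
  refine ⟨?_, ?_, ?_, ?_⟩
  · -- part 1 : vt is real
    intro x
    apply Complex.conj_eq_iff_im.1
    show (starRingEnd ℂ) (∑' j, ct j * EE T j x) = ∑' j, ct j * EE T j x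
    rw [conj_tsum_EE ct x]
    have h1 : ∀ j : ℤ, (starRingEnd ℂ) (ct j) * EE T (-j) x
        = (fun k => ct k * EE T k x) ((Equiv.neg ℤ) j) := by
      intro j
      show (starRingEnd ℂ) (ct j) * EE T (-j) x = ct (-j) * EE T (-j) x
      rw [hct_eq j, Complex.conj_ofReal, hct_eq (-j), hr_even]
    rw [tsum_congr h1, (Equiv.neg ℤ).tsum_eq (f := fun k => ct k * EE T k x)]
  · -- part 2 : same L² norm
    show (∫ x in (0:ℝ)..T, ‖∑' j, ct j * EE T j x‖ ^ 2)
        = ∫ x in (0:ℝ)..T, ‖∑' j, c j * EE T j x‖ ^ 2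
    rw [parseval_EE T hT ct hctsum, parseval_EE T hT c ha]
    congr 1
    have h1 : ∀ j : ℤ, ‖ct j‖ ^ 2 = ((a j ^ 2) + (fun k => a k ^ 2) (-j)) / 2 := by
      intro j
      rw [hct_norm j, hr_sq j]
    rw [tsum_congr h1, tsum_half_even hasq]
  · -- part 3 : same L² norm of derivative
    show (∫ x in (0:ℝ)..T,
        ‖∑' j : ℤ, (Complex.I * (j : ℂ) * (2 * (Real.pi : ℂ)) / (T : ℂ)) * ct j * EE T j x‖ ^ 2)
      = ∫ x in (0:ℝ)..T,
        ‖∑' j : ℤ, (Complex.I * (j : ℂ) * (2 * (Real.pi : ℂ)) / (T : ℂ)) * c j * EE T j x‖ ^ 2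
    have hκ : ∀ j : ℤ, ‖(Complex.I * (j : ℂ) * (2 * (Real.pi : ℂ)) / (T : ℂ))‖
        = |(j : ℝ)| * (2 * Real.pi) / T := by
      intro j
      rw [norm_div, norm_mul, norm_mul, Complex.norm_I, one_mul, Complex.norm_intCast,
        norm_mul, normCoe, normCoe, abs_of_nonneg Real.pi_pos.le, abs_of_nonneg hT.le]
      norm_num
    have hκ_even : ∀ j : ℤ, ‖(Complex.I * ((-j : ℤ) : ℂ) * (2 * (Real.pi : ℂ)) / (T : ℂ))‖
        = ‖(Complex.I * (j : ℂ) * (2 * (Real.pi : ℂ)) / (T : ℂ))‖ := by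
      intro j
      rw [hκ, hκ]
      push_cast
      rw [abs_neg]
    have hκb : ∀ j : ℤ, ‖(Complex.I * (j : ℂ) * (2 * (Real.pi : ℂ)) / (T : ℂ))‖
        ≤ (2 * Real.pi / T) * (1 + |(j : ℝ)|) := by
      intro j
      rw [hκ]
      have h1 : |(j : ℝ)| ≤ 1 + |(j : ℝ)| := by linarith
      have h2 : (0 : ℝ) < 2 * Real.pi / T := by positivity
      calc |(j : ℝ)| * (2 * Real.pi) / T = (2 * Real.pi / T) * |(j : ℝ)| := by ring
        _ ≤ (2 * Real.pi / T) * (1 + |(j : ℝ)|) :=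
            mul_le_mul_of_nonneg_left h1 h2.le
    have hsum_neg : Summable fun j : ℤ => (1 + |(j : ℝ)|) * a (-j) := by
      refine (summable_neg_Z hsum).congr fun j => ?_
      show (1 + |((-j : ℤ) : ℝ)|) * a (-j) = _
      push_cast
      rw [abs_neg]
    have hDt : Summable fun j : ℤ =>
        ‖(Complex.I * (j : ℂ) * (2 * (Real.pi : ℂ)) / (T : ℂ)) * ct j‖ := by
      refine Summable.of_nonneg_of_le (fun j => norm_nonneg _) (fun j => ?_)
        (((hsum.add hsum_neg).mul_left (2 * Real.pi / T)))
      rw [norm_mul, hct_norm]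
      calc ‖(Complex.I * (j : ℂ) * (2 * (Real.pi : ℂ)) / (T : ℂ))‖ * r j
          ≤ ((2 * Real.pi / T) * (1 + |(j : ℝ)|)) * (a j + a (-j)) :=
            mul_le_mul (hκb j) (hr_le j) (hr0 j) (by positivity)
        _ = 2 * Real.pi / T * ((1 + |(j : ℝ)|) * a j + (1 + |(j : ℝ)|) * a (-j)) := by ring
    have hDc : Summable fun j : ℤ =>
        ‖(Complex.I * (j : ℂ) * (2 * (Real.pi : ℂ)) / (T : ℂ)) * c j‖ := by
      refine Summable.of_nonneg_of_le (fun j => norm_nonneg _) (fun j => ?_)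
        (hsum.mul_left (2 * Real.pi / T))
      rw [norm_mul]
      calc ‖(Complex.I * (j : ℂ) * (2 * (Real.pi : ℂ)) / (T : ℂ))‖ * a j
          ≤ ((2 * Real.pi / T) * (1 + |(j : ℝ)|)) * a j :=
            mul_le_mul_of_nonneg_right (hκb j) (ha0 j)
        _ = 2 * Real.pi / T * ((1 + |(j : ℝ)|) * a j) := by ring
    have hL := parseval_EE T hT
      (fun j : ℤ => (Complex.I * (j : ℂ) * (2 * (Real.pi : ℂ)) / (T : ℂ)) * ct j) hDt
    have hR := parseval_EE T hT
      (fun j : ℤ => (Complex.I * (j : ℂ) * (2 * (Real.pi : ℂ)) / (T : ℂ)) * c j) hDc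
    rw [hL, hR]
    congr 1
    set g : ℤ → ℝ := fun j =>
      ‖(Complex.I * (j : ℂ) * (2 * (Real.pi : ℂ)) / (T : ℂ))‖ ^ 2 * a j ^ 2 with hg_def
    have hgsum : Summable g := by
      refine Summable.of_nonneg_of_le (fun j => by positivity) (fun j => ?_)
        ((summable_sq (fun j => by positivity) hsum).mul_left ((2 * Real.pi / T) ^ 2))
      show ‖(Complex.I * (j : ℂ) * (2 * (Real.pi : ℂ)) / (T : ℂ))‖ ^ 2 * a j ^ 2 ≤ _
      have h1 : ‖(Complex.I * (j : ℂ) * (2 * (Real.pi : ℂ)) / (T : ℂ))‖ ^ 2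
          ≤ ((2 * Real.pi / T) * (1 + |(j : ℝ)|)) ^ 2 := by
        apply pow_le_pow_left₀ (norm_nonneg _) (hκb j)
      calc ‖(Complex.I * (j : ℂ) * (2 * (Real.pi : ℂ)) / (T : ℂ))‖ ^ 2 * a j ^ 2
          ≤ ((2 * Real.pi / T) * (1 + |(j : ℝ)|)) ^ 2 * a j ^ 2 :=
            mul_le_mul_of_nonneg_right h1 (sq_nonneg _)
        _ = (2 * Real.pi / T) ^ 2 * ((1 + |(j : ℝ)|) * a j) ^ 2 := by ring
    have h2 : ∀ j : ℤ, ‖(Complex.I * (j : ℂ) * (2 * (Real.pi : ℂ)) / (T : ℂ)) * ct j‖ ^ 2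
        = (g j + g (-j)) / 2 := by
      intro j
      rw [norm_mul, hct_norm, mul_pow, hr_sq]
      have h3 : g (-j) = ‖(Complex.I * (j : ℂ) * (2 * (Real.pi : ℂ)) / (T : ℂ))‖ ^ 2
          * a (-j) ^ 2 := by
        show ‖(Complex.I * ((-j : ℤ) : ℂ) * (2 * (Real.pi : ℂ)) / (T : ℂ))‖ ^ 2 * a (-j) ^ 2 = _
        rw [hκ_even]
      have h5 : g j = ‖(Complex.I * (j : ℂ) * (2 * (Real.pi : ℂ)) / (T : ℂ))‖ ^ 2
          * a j ^ 2 := rfl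
      rw [h3, h5]
      ring
    have h4 : ∀ j : ℤ, ‖(Complex.I * (j : ℂ) * (2 * (Real.pi : ℂ)) / (T : ℂ)) * c j‖ ^ 2
        = g j := by
      intro j
      rw [norm_mul, mul_pow]
    rw [tsum_congr h2, tsum_half_even hgsum, tsum_congr h4]
  · -- part 4
    obtain ⟨s, hs⟩ := hpodd
    have hm : p + 1 = 2 * (s + 1) := by omega
    show (∫ x in (0:ℝ)..T, ‖∑' j, c j * EE T j x‖ ^ (p + 1))
        ≤ ∫ x in (0:ℝ)..T, ‖∑' j, ct j * EE T j x‖ ^ (p + 1)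
    rw [hm]
    have hcoreC := core_W T hT c ha (s + 1)
    have hcoreT := core_W T hT ct hctsum (s + 1)
    have hWR0 : ∀ n : ℤ, 0 ≤ ∑' j : ℤ, r j * r (j - n) :=
      fun n => tsum_nonneg fun j => mul_nonneg (hr0 _) (hr0 _)
    have hWt : ∀ n : ℤ, WD ct n = ((∑' j : ℤ, r j * r (j - n) : ℝ) : ℂ) := by
      intro n
      rw [WD, Complex.ofReal_tsum]
      apply tsum_congr
      intro j
      rw [hct_eq j, hct_eq (j - n), Complex.conj_ofReal, ← Complex.ofReal_mul]
    have hWR_sum : Summable fun n : ℤ => ∑' j : ℤ, r j * r (j - n) := by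
      refine (summable_WA ct hctsum).congr fun n => ?_
      apply tsum_congr
      intro j
      rw [norm_mul, RCLike.norm_conj, hct_norm, hct_norm]
    have hWc_le : ∀ n : ℤ, ‖WD c n‖ ≤ ∑' j : ℤ, r j * r (j - n) := by
      intro n
      calc ‖WD c n‖ ≤ ∑' j : ℤ, ‖c j * (starRingEnd ℂ) (c (j - n))‖ := norm_WD_le c ha n
        _ = ∑' j : ℤ, a j * a (j - n) := by
            apply tsum_congr
            intro j
            rw [norm_mul, RCLike.norm_conj]
        _ ≤ ∑' j : ℤ, r j * r (j - n) := WA_le_WR ha0 ha n r (fun j => rfl) hr_sum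
    have hGnorm_sum : Summable fun g : Fin (s + 1) → ℤ => ∏ i, ‖WD c (g i)‖ :=
      summable_prod_norm (B := WD c) (summable_norm_WD c ha) (s + 1)
    have hGsum : Summable fun g : Fin (s + 1) → ℤ =>
        ‖if (∑ i, g i) = 0 then ∏ i, WD c (g i) else 0‖ := by
      refine Summable.of_nonneg_of_le (fun g => norm_nonneg _) (fun g => ?_) hGnorm_sum
      by_cases h : (∑ i, g i) = 0
      · rw [if_pos h, norm_prod]
      · rw [if_neg h, norm_zero]
        exact Finset.prod_nonneg fun i _ => norm_nonneg _
    have hH_sum : Summable fun g : Fin (s + 1) → ℤ => ∏ i, (∑' j : ℤ, r j * r (j - g i)) := by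
      have hB : Summable fun n : ℤ => ‖((∑' j : ℤ, r j * r (j - n) : ℝ) : ℂ)‖ := by
        refine hWR_sum.congr fun n => ?_
        rw [normCoe, abs_of_nonneg (hWR0 n)]
      have := summable_prod_norm (B := fun n : ℤ => ((∑' j : ℤ, r j * r (j - n) : ℝ) : ℂ))
        hB (s + 1)
      refine this.congr fun g => ?_
      apply Finset.prod_congr rfl
      intro i _
      rw [normCoe, abs_of_nonneg (hWR0 (g i))]
    have hHite_sum : Summable fun g : Fin (s + 1) → ℤ =>
        (if (∑ i, g i) = 0 then ∏ i, (∑' j : ℤ, r j * r (j - g i)) else 0) := by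
      refine Summable.of_nonneg_of_le (fun g => ?_) (fun g => ?_) hH_sum
      · by_cases h : (∑ i, g i) = 0
        · rw [if_pos h]
          exact Finset.prod_nonneg fun i _ => hWR0 _
        · rw [if_neg h]
      · by_cases h : (∑ i, g i) = 0
        · rw [if_pos h]
        · rw [if_neg h]
          exact Finset.prod_nonneg fun i _ => hWR0 _
    -- the rearranged integral equals the explicit sum
    have hA : (∫ x in (0:ℝ)..T, ‖∑' j, ct j * EE T j x‖ ^ (2 * (s + 1)))
        = T * ∑' g : Fin (s + 1) → ℤ,
            (if (∑ i, g i) = 0 then ∏ i, (∑' j : ℤ, r j * r (j - g i)) else 0) := by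
      apply Complex.ofReal_inj.1
      rw [hcoreT, Complex.ofReal_mul, Complex.ofReal_tsum]
      congr 1
      apply tsum_congr
      intro g
      rw [apply_ite (fun x : ℝ => (x : ℂ)), Complex.ofReal_zero, Complex.ofReal_prod]
      congr 1
      apply Finset.prod_congr rfl
      intro i _
      rw [hWt]
    -- the original integral is bounded by the same sum
    have hv0 : 0 ≤ ∫ x in (0:ℝ)..T, ‖∑' j, c j * EE T j x‖ ^ (2 * (s + 1)) := by
      apply intervalIntegral.integral_nonneg hT.le
      intro x _
      positivity
    have hB : (∫ x in (0:ℝ)..T, ‖∑' j, c j * EE T j x‖ ^ (2 * (s + 1)))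
        ≤ T * ∑' g : Fin (s + 1) → ℤ,
            (if (∑ i, g i) = 0 then ∏ i, (∑' j : ℤ, r j * r (j - g i)) else 0) := by
      calc (∫ x in (0:ℝ)..T, ‖∑' j, c j * EE T j x‖ ^ (2 * (s + 1)))
          = ‖((∫ x in (0:ℝ)..T, ‖∑' j, c j * EE T j x‖ ^ (2 * (s + 1)) : ℝ) : ℂ)‖ := by
            rw [normCoe, abs_of_nonneg hv0]
        _ = ‖(T : ℂ) * ∑' g : Fin (s + 1) → ℤ,
              (if (∑ i, g i) = 0 then ∏ i, WD c (g i) else 0)‖ := by rw [hcoreC]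
        _ = T * ‖∑' g : Fin (s + 1) → ℤ,
              (if (∑ i, g i) = 0 then ∏ i, WD c (g i) else 0)‖ := by
            rw [norm_mul, normCoe, abs_of_nonneg hT.le]
        _ ≤ T * ∑' g : Fin (s + 1) → ℤ,
              ‖if (∑ i, g i) = 0 then ∏ i, WD c (g i) else 0‖ :=
            mul_le_mul_of_nonneg_left (norm_tsum_le_tsum_norm hGsum) hT.le
        _ ≤ T * ∑' g : Fin (s + 1) → ℤ,
              (if (∑ i, g i) = 0 then ∏ i, (∑' j : ℤ, r j * r (j - g i)) else 0) := by
            refine mul_le_mul_of_nonneg_left (Summable.tsum_le_tsum (fun g => ?_) hGsum hHite_sum) hT.le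
            by_cases h : (∑ i, g i) = 0
            · rw [if_pos h, if_pos h, norm_prod]
              exact Finset.prod_le_prod (fun i _ => norm_nonneg _) (fun i _ => hWc_le (g i))
            · rw [if_neg h, if_neg h, norm_zero]
    rw [hA]
    exact hB
end
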